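/- Let P : Cᵒᵖ → BoolAlg be a Boolean doctrine over a category C with finite products, and let (F_X)_{X ∈ C} be a universal ultrafilter for P such that P is rich with respect to (F_X)_{X ∈ C}. Then there is a propositional model (M, 𝔪) of P such that, for all X ∈ C, F_X = {α ∈ P(X) : for all x ∈ M(X), x ∈ 𝔪_X(α)}. -/

import Mathlib

open CategoryTheory CategoryTheory.Limits Opposite

universe w v u v₁ u₁ v₂ u₂ v₃ u₃

namespace BooleanDoctrine

/-- Elements of a Boolean algebra in the category `BoolAlg` can be acted on by morphisms. -/
instance (X Y : BoolAlg) : FunLike (X ⟶ Y) X Y :=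
  { coe := fun f => f.hom
    coe_injective := fun _ _ h => BoolAlg.Hom.ext (DFunLike.coe_injective h) }

/-- A filter of a Boolean algebra: contains `⊤`, closed under binary meets, upward closed. -/
def IsBAFilter {A : Type*} [BooleanAlgebra A] (F : Set A) : Prop :=
  (⊤ : A) ∈ F ∧ (∀ a b : A, a ∈ F → b ∈ F → a ⊓ b ∈ F) ∧ ∀ a b : A, a ∈ F → a ≤ b → b ∈ F

/-- The fiber of a Boolean doctrine at an object of the base category. -/
abbrev fiber {C : Type u₁} [Category.{v₁} C] (P : Cᵒᵖ ⥤ BoolAlg.{w}) (X : C) : Type w :=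
  P.obj (op X)

/-- A universal filter for a Boolean doctrine `P : Cᵒᵖ ⥤ BoolAlg`. -/
def IsUniversalFilter {C : Type u₁} [Category.{v₁} C] [HasFiniteProducts C]
    (P : Cᵒᵖ ⥤ BoolAlg.{w}) (F : ∀ X : C, Set (P.obj (op X))) : Prop :=
  (∀ (X Y : C) (f : X ⟶ Y) (α : P.obj (op Y)), α ∈ F Y → P.map f.op α ∈ F X) ∧
    ∀ X : C, IsBAFilter (F X)

/-- A universal ideal for a Boolean doctrine `P : Cᵒᵖ ⥤ BoolAlg`. -/
def IsUniversalIdeal {C : Type u₁} [Category.{v₁} C] [HasFiniteProducts C]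
    (P : Cᵒᵖ ⥤ BoolAlg.{w}) (I : ∀ X : C, Set (P.obj (op X))) : Prop :=
  (∀ (X Y : C) (m : ℕ) (f : Fin m → (X ⟶ Y)) (α : P.obj (op Y)),
      (Finset.univ.inf fun j => P.map (f j).op α) ∈ I X → α ∈ I Y) ∧
    (∀ (X : C) (a b : P.obj (op X)), a ≤ b → b ∈ I X → a ∈ I X) ∧
    (∀ (X₁ X₂ : C) (α₁ : P.obj (op X₁)) (α₂ : P.obj (op X₂)), α₁ ∈ I X₁ → α₂ ∈ I X₂ →
      P.map (prod.fst : X₁ ⨯ X₂ ⟶ X₁).op α₁ ⊔ P.map (prod.snd : X₁ ⨯ X₂ ⟶ X₂).op α₂ ∈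
        I (X₁ ⨯ X₂)) ∧
    (⊥ : P.obj (op (⊤_ C))) ∈ I (⊤_ C)

/-- A universal ultrafilter for a Boolean doctrine `P : Cᵒᵖ ⥤ BoolAlg`. -/
def IsUniversalUltrafilter {C : Type u₁} [Category.{v₁} C] [HasFiniteProducts C]
    (P : Cᵒᵖ ⥤ BoolAlg.{w}) (F : ∀ X : C, Set (P.obj (op X))) : Prop :=
  (∀ (X Y : C) (f : X ⟶ Y) (α : P.obj (op Y)), α ∈ F Y → P.map f.op α ∈ F X) ∧
    (∀ X : C, IsBAFilter (F X)) ∧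
    (∀ (X₁ X₂ : C) (α₁ : P.obj (op X₁)) (α₂ : P.obj (op X₂)),
      P.map (prod.fst : X₁ ⨯ X₂ ⟶ X₁).op α₁ ⊔ P.map (prod.snd : X₁ ⨯ X₂ ⟶ X₂).op α₂ ∈
          F (X₁ ⨯ X₂) →
        α₁ ∈ F X₁ ∨ α₂ ∈ F X₂) ∧
    (⊥ : P.obj (op (⊤_ C))) ∉ F (⊤_ C)

/-- Richness of a Boolean doctrine with respect to a family of subsets of the fibers. -/
def IsRich {C : Type u₁} [Category.{v₁} C] [HasFiniteProducts C]
    (P : Cᵒᵖ ⥤ BoolAlg.{w}) (F : ∀ X : C, Set (P.obj (op X))) : Prop :=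
  ∀ (X : C) (α : P.obj (op X)), α ∉ F X → ∃ c : (⊤_ C) ⟶ X, P.map c.op α ∉ F (⊤_ C)

/-- The failure of the "universal closure" of `a` witnessed by a constant `c : ⊤ ⟶ X`. -/
def IsRichAt {C : Type u₁} [Category.{v₁} C] [HasFiniteProducts C]
    (P : Cᵒᵖ ⥤ BoolAlg.{w}) (F : ∀ X : C, Set (P.obj (op X)))
    (X : C) (a : P.obj (op X)) : Prop :=
  ∃ c : (⊤_ C) ⟶ X, P.map c.op a ∉ F (⊤_ C)

/-- The universal filter generated by a family of subsets of the fibers: the intersection of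
all universal filters containing the family componentwise. -/
def genUnivFilter {C : Type u₁} [Category.{v₁} C] [HasFiniteProducts C]
    (P : Cᵒᵖ ⥤ BoolAlg.{w}) (A : ∀ X : C, Set (P.obj (op X))) :
    ∀ X : C, Set (P.obj (op X)) := fun X =>
  {φ | ∀ G : ∀ X' : C, Set (P.obj (op X')),
    IsUniversalFilter P G → (∀ X', A X' ⊆ G X') → φ ∈ G X}

/-- The universal ideal generated by a family of subsets of the fibers: the intersection of
all universal ideals containing the family componentwise. -/
def genUnivIdeal {C : Type u₁} [Category.{v₁} C] [HasFiniteProducts C]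
    (P : Cᵒᵖ ⥤ BoolAlg.{w}) (A : ∀ X : C, Set (P.obj (op X))) :
    ∀ X : C, Set (P.obj (op X)) := fun X =>
  {φ | ∀ J : ∀ X' : C, Set (P.obj (op X')),
    IsUniversalIdeal P J → (∀ X', A X' ⊆ J X') → φ ∈ J X}

/-- The family of subsets of the fibers placing the element `α i` in the component `Y i`. -/
def familyOfPoints {C : Type u₁} [Category.{v₁} C] (P : Cᵒᵖ ⥤ BoolAlg.{w}) {ι : Type u₃}
    (Y : ι → C) (α : ∀ i, P.obj (op (Y i))) : ∀ X : C, Set (P.obj (op X)) := fun X =>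
  {a | ∃ (i : ι) (h : Y i = X), a = P.map (eqToHom h.symm).op (α i)}

/-- The subsets doctrine, sending a set to its powerset Boolean algebra and a function to
its preimage map. -/
def subsetsDoctrine : (Type v)ᵒᵖ ⥤ BoolAlg.{v} where
  obj X := BoolAlg.of (Set X.unop)
  map f :=
    BoolAlg.ofHom
    { toFun := fun S => f.unop ⁻¹' S
      map_sup' := fun _ _ => rfl
      map_inf' := fun _ _ => rfl
      map_top' := rfl
      map_bot' := rfl }
  map_id _ := rfl
  map_comp _ _ := rfl

/-- A Boolean doctrine morphism: a finite-product-preserving functor together with a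
natural transformation. -/
structure DoctrineHom {C : Type u₁} [Category.{v₁} C] {D : Type u₂} [Category.{v₂} D]
    (P : Cᵒᵖ ⥤ BoolAlg.{w}) (R : Dᵒᵖ ⥤ BoolAlg.{w}) where
  functor : C ⥤ D
  preserves : PreservesFiniteProducts functor
  trans : P ⟶ functor.op ⋙ R

/-- Composition of Boolean doctrine morphisms. -/
def DoctrineHom.comp {C : Type u₁} [Category.{v₁} C] {D : Type u₂} [Category.{v₂} D]
    {E : Type u₃} [Category.{v₃} E]
    {P : Cᵒᵖ ⥤ BoolAlg.{w}} {R : Dᵒᵖ ⥤ BoolAlg.{w}} {S : Eᵒᵖ ⥤ BoolAlg.{w}}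
    (Φ : DoctrineHom P R) (Ψ : DoctrineHom R S) : DoctrineHom P S where
  functor := Φ.functor ⋙ Ψ.functor
  preserves := by
    have := Φ.preserves; have := Ψ.preserves
    infer_instance
  trans := Φ.trans ≫ Functor.whiskerLeft Φ.functor.op Ψ.trans

/-- A first-order structure on a Boolean doctrine: fiberwise right adjoints to reindexing
along first projections, satisfying the Beck–Chevalley condition. -/
structure FOStructure {C : Type u₁} [Category.{v₁} C] [HasFiniteProducts C]
    (P : Cᵒᵖ ⥤ BoolAlg.{w}) where
  fa : ∀ X Y : C, P.obj (op (X ⨯ Y)) → P.obj (op X)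
  adj : ∀ (X Y : C) (α : P.obj (op X)) (β : P.obj (op (X ⨯ Y))),
      α ≤ fa X Y β ↔ P.map (prod.fst : X ⨯ Y ⟶ X).op α ≤ β
  bc : ∀ (X X' Y : C) (f : X' ⟶ X) (β : P.obj (op (X ⨯ Y))),
      P.map f.op (fa X Y β) = fa X' Y (P.map (prod.map f (𝟙 Y)).op β)

/-- The existential quantifier `∃ = ¬∀¬` associated to a first-order structure. -/
noncomputable def FOStructure.ex {C : Type u₁} [Category.{v₁} C] [HasFiniteProducts C]
    {P : Cᵒᵖ ⥤ BoolAlg.{w}} (fo : FOStructure P) (X Y : C)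
    (β : P.obj (op (X ⨯ Y))) : P.obj (op X) :=
  (fo.fa X Y βᶜ)ᶜ

/-- The canonical comparison morphism `M X ⨯ M Y ⟶ M (X ⨯ Y)` of a Boolean doctrine
morphism, inverse to the product comparison morphism. -/
noncomputable def DoctrineHom.prodPair {C : Type u₁} [Category.{v₁} C] [HasFiniteProducts C]
    {D : Type u₂} [Category.{v₂} D] [HasFiniteProducts D]
    {P : Cᵒᵖ ⥤ BoolAlg.{w}} {R : Dᵒᵖ ⥤ BoolAlg.{w}} (Φ : DoctrineHom P R) (X Y : C) :
    (Φ.functor.obj X ⨯ Φ.functor.obj Y) ⟶ Φ.functor.obj (X ⨯ Y) :=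
  letI := Φ.preserves
  (PreservesLimitPair.iso Φ.functor X Y).inv

/-- The image of an element of `P (X ⨯ Y)` in `R (M X ⨯ M Y)`, transported along the
canonical isomorphism `M (X ⨯ Y) ≅ M X ⨯ M Y`. -/
noncomputable def DoctrineHom.transProd {C : Type u₁} [Category.{v₁} C] [HasFiniteProducts C]
    {D : Type u₂} [Category.{v₂} D] [HasFiniteProducts D]
    {P : Cᵒᵖ ⥤ BoolAlg.{w}} {R : Dᵒᵖ ⥤ BoolAlg.{w}} (Φ : DoctrineHom P R) (X Y : C)
    (α : P.obj (op (X ⨯ Y))) : R.obj (op (Φ.functor.obj X ⨯ Φ.functor.obj Y)) :=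
  R.map (Φ.prodPair X Y).op (Φ.trans.app (op (X ⨯ Y)) α)

/-- A Boolean doctrine morphism between first-order Boolean doctrines is first-order when it
commutes with the universal quantifiers. -/
def DoctrineHom.IsFO {C : Type u₁} [Category.{v₁} C] [HasFiniteProducts C]
    {D : Type u₂} [Category.{v₂} D] [HasFiniteProducts D]
    {P : Cᵒᵖ ⥤ BoolAlg.{w}} {R : Dᵒᵖ ⥤ BoolAlg.{w}} (Φ : DoctrineHom P R)
    (foP : FOStructure P) (foR : FOStructure R) : Prop :=
  ∀ (X Y : C) (β : P.obj (op (X ⨯ Y))),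
    (Φ.trans.app (op X) (foP.fa X Y β) : R.obj (op (Φ.functor.obj X))) =
      foR.fa (Φ.functor.obj X) (Φ.functor.obj Y) (Φ.transProd X Y β)

/-- The Boolean doctrine morphism with identity functor part induced by a natural
transformation between two doctrines over the same base. -/
def idDoctrineHom {C : Type u₁} [Category.{v₁} C] {P Q : Cᵒᵖ ⥤ BoolAlg.{w}} (η : P ⟶ Q) :
    DoctrineHom P Q where
  functor := 𝟭 C
  preserves := inferInstance
  trans := η

/-- A quantifier completion of a Boolean doctrine `P`: a first-order Boolean doctrine `Q`
over the same base category together with a Boolean doctrine morphism `(𝟭 C, ι) : P ⟶ Q`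
whose functor part is the identity, such that every Boolean doctrine morphism from `P` to a
first-order Boolean doctrine factors uniquely through it via a first-order Boolean doctrine
morphism. -/
structure QuantifierCompletion.{w', v', u', v₁', u₁'} {C : Type u₁'} [Category.{v₁'} C]
    [HasFiniteProducts C] (P : Cᵒᵖ ⥤ BoolAlg.{w'}) where
  Q : Cᵒᵖ ⥤ BoolAlg.{w'}
  fo : FOStructure Q
  ι : P ⟶ Q
  univ : ∀ {D : Type u'} [Category.{v'} D] [HasFiniteProducts D]
      (R : Dᵒᵖ ⥤ BoolAlg.{w'}) (foR : FOStructure R) (Φ : DoctrineHom P R),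
      ∃! Ψ : DoctrineHom Q R, Ψ.IsFO fo foR ∧ Φ = (idDoctrineHom ι).comp Ψ

/-- A propositional model of a Boolean doctrine: a Boolean doctrine morphism to the
subsets doctrine. -/
abbrev PropModel {C : Type u} [Category.{v} C] (P : Cᵒᵖ ⥤ BoolAlg.{v}) :=
  DoctrineHom P subsetsDoctrine.{v}

/-- The subset of `M X` interpreting an element `α ∈ P X` in a propositional model. -/
def PropModel.interp {C : Type u} [Category.{v} C] {P : Cᵒᵖ ⥤ BoolAlg.{v}}
    (M : PropModel P) {X : C} (α : P.obj (op X)) : Set (M.functor.obj X) :=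
  show Set (M.functor.obj X) from M.trans.app (op X) α



/-- The object map of a Boolean doctrine morphism. -/
abbrev DoctrineHom.onObj {C : Type u₁} [Category.{v₁} C] {D : Type u₂} [Category.{v₂} D]
    {P : Cᵒᵖ ⥤ BoolAlg.{w}} {R : Dᵒᵖ ⥤ BoolAlg.{w}} (Φ : DoctrineHom P R) (X : C) : D :=
  Φ.functor.obj X

/-- The component at `X` of the natural transformation of a Boolean doctrine morphism,
applied to an element of the fiber. -/
abbrev DoctrineHom.appAt {C : Type u₁} [Category.{v₁} C] {D : Type u₂} [Category.{v₂} D]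
    {P : Cᵒᵖ ⥤ BoolAlg.{w}} {R : Dᵒᵖ ⥤ BoolAlg.{w}} (Φ : DoctrineHom P R) (X : C)
    (a : P.obj (op X)) : R.obj (op (Φ.functor.obj X)) :=
  Φ.trans.app (op X) a

/-!
The model is the functor of global elements `X ↦ (⊤_ C ⟶ X)`, which preserves finite
products, with `α ∈ P X` interpreted as the set of constants `c` with `P c α ∈ F (⊤_ C)`.
Since `F (⊤_ C)` is a prime proper filter, membership in it is a Boolean homomorphism
`P (⊤_ C) → Prop`, so this interpretation is a natural family of Boolean homomorphisms.
Stability of `F` under reindexing gives `F X ⊆ {α | α holds at every constant}`, and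
richness is exactly the reverse inclusion.
-/

instance (X Y : BoolAlg) : BoundedLatticeHomClass (X ⟶ Y) X Y where
  map_sup f := f.hom.map_sup'
  map_inf f := f.hom.map_inf'
  map_top f := f.hom.map_top'
  map_bot f := f.hom.map_bot'

lemma IsBAFilter.inf_mem_iff {A : Type*} [BooleanAlgebra A] {F : Set A} (hF : IsBAFilter F)
    {a b : A} : a ⊓ b ∈ F ↔ a ∈ F ∧ b ∈ F :=
  ⟨fun h => ⟨hF.2.2 _ _ h inf_le_left, hF.2.2 _ _ h inf_le_right⟩,
    fun h => hF.2.1 _ _ h.1 h.2⟩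

def IsBAFilter.memHom {A : Type*} [BooleanAlgebra A] {F : Set A} (hF : IsBAFilter F)
    (hprime : ∀ a b : A, a ⊔ b ∈ F → a ∈ F ∨ b ∈ F) (hbot : ⊥ ∉ F) :
    BoundedLatticeHom A Prop where
  toFun a := a ∈ F
  map_sup' a b := propext
    ⟨hprime a b, fun h => h.elim (hF.2.2 _ _ · le_sup_left) (hF.2.2 _ _ · le_sup_right)⟩
  map_inf' _ _ := propext hF.inf_mem_iff
  map_top' := propext (iff_true_intro hF.1)
  map_bot' := propext (iff_false_intro hbot)

section GlobalElements

variable {C : Type u} [Category.{v} C] [HasFiniteProducts C] {P : Cᵒᵖ ⥤ BoolAlg.{v}}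

omit [HasFiniteProducts C] in
lemma map_comp_apply {X Y Z : C} (f : X ⟶ Y) (g : Y ⟶ Z) (a : P.obj (op Z)) :
    P.map (f ≫ g).op a = P.map f.op (P.map g.op a) := by
  rw [op_comp, P.map_comp]
  rfl

noncomputable def globalElementsModel (χ : BoundedLatticeHom (P.obj (op (⊤_ C))) Prop) :
    PropModel P where
  functor := coyoneda.obj (op (⊤_ C))
  preserves := inferInstance
  trans :=
    { app X := BoolAlg.ofHom
        { toFun a := {c : ⊤_ C ⟶ X.unop | χ (P.map c.op a)}
          map_sup' a b := Set.ext fun c => by simp only [map_sup]; rfl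
          map_inf' a b := Set.ext fun c => by simp only [map_inf]; rfl
          map_top' := Set.ext fun c => by simp only [map_top]; rfl
          map_bot' := Set.ext fun c => by simp only [map_bot]; rfl }
      naturality X Y f := BoolAlg.Hom.ext <| DFunLike.ext _ _ fun a => Set.ext fun c => by
        change χ (P.map c.op (P.map f a)) ↔ χ (P.map (c ≫ f.unop).op a)
        rw [map_comp_apply]
        rfl }

lemma mem_interp_globalElementsModel (χ : BoundedLatticeHom (P.obj (op (⊤_ C))) Prop) {X : C}
    (α : P.obj (op X)) (c : (globalElementsModel χ).functor.obj X) :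
    c ∈ (globalElementsModel χ).interp α ↔ χ (P.map c.op α) :=
  Iff.rfl

variable {F : ∀ X : C, Set (P.obj (op X))}

lemma IsUniversalUltrafilter.mem_or_mem_of_sup_mem_terminal (hF : IsUniversalUltrafilter P F)
    (a b : P.obj (op (⊤_ C))) (h : a ⊔ b ∈ F (⊤_ C)) : a ∈ F (⊤_ C) ∨ b ∈ F (⊤_ C) := by
  have hsnd : (prod.snd : (⊤_ C) ⨯ (⊤_ C) ⟶ (⊤_ C)) = prod.fst := Subsingleton.elim _ _
  apply hF.2.2.1 _ _ a b
  rw [hsnd, ← map_sup]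
  exact hF.1 _ _ prod.fst _ h

noncomputable def IsUniversalUltrafilter.terminalMemHom (hF : IsUniversalUltrafilter P F) :
    BoundedLatticeHom (P.obj (op (⊤_ C))) Prop :=
  (hF.2.1 (⊤_ C)).memHom hF.mem_or_mem_of_sup_mem_terminal hF.2.2.2

end GlobalElements

theorem stmt8 {C : Type u} [Category.{v} C] [HasFiniteProducts C]
    (P : Cᵒᵖ ⥤ BoolAlg.{v}) (F : ∀ X : C, Set (P.obj (op X)))
    (hF : IsUniversalUltrafilter P F) (hrich : IsRich P F) :
    ∃ M : PropModel P, ∀ (X : C) (α : P.obj (op X)),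
      α ∈ F X ↔ ∀ x : M.functor.obj X, x ∈ PropModel.interp M α := by
  refine ⟨globalElementsModel hF.terminalMemHom, fun X α => ⟨fun hα c => ?_, fun h => ?_⟩⟩
  · exact (mem_interp_globalElementsModel _ α c).2 (hF.1 _ _ c α hα)
  · by_contra hα
    obtain ⟨c, hc⟩ := hrich X α hα
    exact hc ((mem_interp_globalElementsModel _ α c).1 (h c))

end BooleanDoctrine
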